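/- arXiv:2403.10855 — 3 statements merged into one kernel-verified Lean document; each statement's English description precedes it below -/
import Mathlib

section
/- Let n ≥ k, let A be a real n×k matrix with singular values σ₁, …, σ_k. Then for every matrix B in the Stiefel manifold V_{n,k}, the squared Frobenius distance satisfies ‖A − B‖_F² ≥ Σ_{i=1}^{k} (σ_i − 1)². -/
open Matrix Finset

/-- Let `n ≥ k` and let `A` be a real `n × k` matrix whose singular values
`σ₁, …, σ_k` are the (nonnegative) square roots of the eigenvalues of `Aᵀ A`, i.e.
`Aᵀ A = V * diag(σ²) * Vᵀ` for some orthogonal `V`. Then for every matrix `B` on the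
Stiefel manifold (`Bᵀ B = I_k`) the squared Frobenius distance satisfies
`‖A − B‖_F² ≥ Σ_{i=1}^{k} (σ_i − 1)²`. -/
theorem stiefel_dist_sq_ge_sum_sq_singular_sub_one
    (n k : ℕ) (hk : k ≤ n)
    (A : Matrix (Fin n) (Fin k) ℝ) (V : Matrix (Fin k) (Fin k) ℝ)
    (σ : Fin k → ℝ) (hσ : ∀ i, 0 ≤ σ i)
    (hV : Vᵀ * V = 1)
    (hsing : Aᵀ * A = V * Matrix.diagonal (fun i => (σ i) ^ 2) * Vᵀ) :
    ∀ B : Matrix (Fin n) (Fin k) ℝ, Bᵀ * B = 1 →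
      ∑ i : Fin k, (σ i - 1) ^ 2 ≤ ∑ i : Fin n, ∑ j : Fin k, (A i j - B i j) ^ 2 := by
  intro B hB
  have hVV : V * Vᵀ = 1 := mul_eq_one_comm.mp hV
  -- N = B * V has orthonormal columns
  have hN : (B * V)ᵀ * (B * V) = 1 := by
    rw [Matrix.transpose_mul, Matrix.mul_assoc, ← Matrix.mul_assoc Bᵀ B V, hB,
      Matrix.one_mul, hV]
  -- M = A * V has columns of norm σ i
  have hM : (A * V)ᵀ * (A * V) = Matrix.diagonal (fun i => (σ i) ^ 2) := by
    rw [Matrix.transpose_mul, Matrix.mul_assoc, ← Matrix.mul_assoc Aᵀ A V, hsing]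
    have h1 : V * Matrix.diagonal (fun i => (σ i) ^ 2) * Vᵀ * V
        = V * Matrix.diagonal (fun i => (σ i) ^ 2) := by
      rw [Matrix.mul_assoc, hV, Matrix.mul_one]
    rw [h1, ← Matrix.mul_assoc, hV, Matrix.one_mul]
  -- column norms, entrywise
  have hNcol : ∀ i : Fin k, ∑ j : Fin n, ((B * V) j i) ^ 2 = 1 := by
    intro i
    have := congrArg (fun X => X i i) hN
    simpa [Matrix.mul_apply, Matrix.one_apply, sq, mul_comm] using this
  have hMcol : ∀ i : Fin k, ∑ j : Fin n, ((A * V) j i) ^ 2 = (σ i) ^ 2 := by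
    intro i
    have := congrArg (fun X => X i i) hM
    simpa [Matrix.mul_apply, sq, mul_comm] using this
  -- Cauchy–Schwarz per column
  have key : ∀ i : Fin k, ∑ j : Fin n, (B * V) j i * (A * V) j i ≤ σ i := by
    intro i
    have hcs := Finset.sum_mul_sq_le_sq_mul_sq Finset.univ
      (fun j => (B * V) j i) (fun j => (A * V) j i)
    rw [hNcol i, hMcol i, one_mul] at hcs
    nlinarith [hσ i, hcs]
  -- trace identity: ∑ᵢ ⟨(BV)ᵢ, (AV)ᵢ⟩ = ∑ᵢⱼ A i j * B i j
  have htr : ∑ i : Fin k, ∑ j : Fin n, (B * V) j i * (A * V) j i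
      = ∑ i : Fin n, ∑ j : Fin k, A i j * B i j := by
    have h1 : Matrix.trace ((B * V)ᵀ * (A * V)) = Matrix.trace (Bᵀ * A) := by
      rw [Matrix.transpose_mul, Matrix.mul_assoc, Matrix.trace_mul_comm,
        Matrix.mul_assoc, Matrix.mul_assoc, hVV, Matrix.mul_one]
    simpa [Matrix.trace, Matrix.diag, Matrix.mul_apply, Finset.sum_comm (γ := Fin n),
      mul_comm] using h1
  have hA2 : ∑ i : Fin n, ∑ j : Fin k, (A i j) ^ 2 = ∑ i : Fin k, (σ i) ^ 2 := by
    have h1 : Matrix.trace (Aᵀ * A) = ∑ i : Fin k, (σ i) ^ 2 := by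
      rw [hsing, Matrix.trace_mul_comm, ← Matrix.mul_assoc, hV, Matrix.one_mul]
      simp [Matrix.trace, Matrix.diag]
    have h2 : Matrix.trace (Aᵀ * A) = ∑ i : Fin n, ∑ j : Fin k, (A i j) ^ 2 := by
      simp [Matrix.trace, Matrix.diag, Matrix.mul_apply, sq]
      exact Finset.sum_comm
    linarith
  have hB2 : ∑ i : Fin n, ∑ j : Fin k, (B i j) ^ 2 = (k : ℝ) := by
    have h2 : Matrix.trace (Bᵀ * B) = ∑ i : Fin n, ∑ j : Fin k, (B i j) ^ 2 := by
      simp [Matrix.trace, Matrix.diag, Matrix.mul_apply, sq]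
      exact Finset.sum_comm
    rw [hB] at h2
    simpa using h2.symm
  have hsum : ∑ i : Fin n, ∑ j : Fin k, A i j * B i j ≤ ∑ i : Fin k, σ i := by
    rw [← htr]
    exact Finset.sum_le_sum fun i _ => key i
  have expand : ∑ i : Fin n, ∑ j : Fin k, (A i j - B i j) ^ 2
      = (∑ i : Fin n, ∑ j : Fin k, (A i j) ^ 2)
        - 2 * (∑ i : Fin n, ∑ j : Fin k, A i j * B i j)
        + (∑ i : Fin n, ∑ j : Fin k, (B i j) ^ 2) := by
    simp only [Finset.mul_sum, ← Finset.sum_sub_distrib, ← Finset.sum_add_distrib]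
    apply Finset.sum_congr rfl
    intro i _
    apply Finset.sum_congr rfl
    intro j _
    ring
  have lhs : ∑ i : Fin k, (σ i - 1) ^ 2
      = (∑ i : Fin k, (σ i) ^ 2) - 2 * (∑ i : Fin k, σ i) + (k : ℝ) := by
    have : ∑ i : Fin k, (σ i - 1) ^ 2
        = ∑ i : Fin k, ((σ i) ^ 2 - 2 * σ i + 1) := by
      apply Finset.sum_congr rfl; intro i _; ring
    rw [this]
    simp [Finset.sum_add_distrib, Finset.sum_sub_distrib, Finset.mul_sum]
  rw [expand, lhs, hA2, hB2]
  linarith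
end

section
/- Let n ≥ k and let A be a real n×k matrix with thin singular value decomposition A = U S Vᵀ, where U is an n×k matrix with orthonormal columns, V is a k×k orthogonal matrix, and S = diag(σ₁, …, σ_k). Then the matrix B = U Vᵀ lies on the Stiefel manifold V_{n,k} and satisfies ‖A − B‖_F² = Σ_{i=1}^{k} (σ_i − 1)²; hence U Vᵀ is a projection of A onto the Stiefel manifold, attaining the infimum of the squared Frobenius distance inf { ‖A − B‖_F² : B ∈ V_{n,k} } = Σ_{i=1}^{k} (σ_i − 1)². -/
open Matrix Finset


private lemma frob2 {n k : ℕ} (X Y : Matrix (Fin n) (Fin k) ℝ) :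
    ∑ i : Fin n, ∑ j : Fin k, X i j * Y i j = Matrix.trace (Xᵀ * Y) := by
  rw [Finset.sum_comm]
  simp [Matrix.trace, Matrix.mul_apply, Matrix.diag]

private lemma trace_diag_mul {k : ℕ} (σ : Fin k → ℝ) (M : Matrix (Fin k) (Fin k) ℝ) :
    Matrix.trace (Matrix.diagonal σ * M) = ∑ i : Fin k, σ i * M i i := by
  simp [Matrix.trace, Matrix.diag, Matrix.diagonal_mul]

private lemma diag_sq_sum {k : ℕ} (f : Fin k → ℝ) :
    ∑ i : Fin k, ∑ j : Fin k, ((Matrix.diagonal f) i j) ^ 2 = ∑ i : Fin k, f i ^ 2 := by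
  refine Finset.sum_congr rfl fun i _ => ?_
  rw [Finset.sum_eq_single i]
  · simp
  · intro j _ hj; simp [Matrix.diagonal_apply_ne' _ hj]
  · simp


/-- Let `n ≥ k` and let `A` be a real `n × k` matrix with thin SVD
`A = U * S * Vᵀ` (`Uᵀ U = I_k`, `V` orthogonal `k × k`, `S = diag(σ₁, …, σ_k)`, `σ ≥ 0`).
Then `B = U * Vᵀ` lies on the Stiefel manifold `V_{n,k} = {B | Bᵀ B = I_k}`, satisfies
`‖A − B‖_F² = Σ_{i=1}^{k} (σ_i − 1)²`, and hence `U Vᵀ` is a projection of `A` onto the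
Stiefel manifold attaining the infimum
`inf { ‖A − B‖_F² : B ∈ V_{n,k} } = Σ_{i=1}^{k} (σ_i − 1)²`. -/
theorem stiefel_projection_eq_UVt
    (n k : ℕ) (hk : k ≤ n)
    (A U : Matrix (Fin n) (Fin k) ℝ) (V : Matrix (Fin k) (Fin k) ℝ)
    (σ : Fin k → ℝ) (hσ : ∀ i, 0 ≤ σ i)
    (hU : Uᵀ * U = 1) (hV : Vᵀ * V = 1)
    (hSVD : A = U * Matrix.diagonal σ * Vᵀ) :
    (U * Vᵀ)ᵀ * (U * Vᵀ) = 1 ∧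
    (∑ i : Fin n, ∑ j : Fin k, (A i j - (U * Vᵀ) i j) ^ 2 = ∑ i : Fin k, (σ i - 1) ^ 2) ∧
    sInf {d : ℝ | ∃ B : Matrix (Fin n) (Fin k) ℝ,
        Bᵀ * B = 1 ∧ d = ∑ i : Fin n, ∑ j : Fin k, (A i j - B i j) ^ 2}
      = ∑ i : Fin k, (σ i - 1) ^ 2 := by
  have hVVt : V * Vᵀ = 1 := mul_eq_one_comm.mp hV
  -- part 1
  have part1 : (U * Vᵀ)ᵀ * (U * Vᵀ) = 1 := by
    calc (U * Vᵀ)ᵀ * (U * Vᵀ) = V * (Uᵀ * U) * Vᵀ := by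
          simp [Matrix.transpose_mul, Matrix.mul_assoc]
      _ = 1 := by rw [hU]; simp [hVVt]
  -- generic Frobenius norm of U * M * Vᵀ
  have key : ∀ M : Matrix (Fin k) (Fin k) ℝ,
      ∑ i : Fin n, ∑ j : Fin k, ((U * M * Vᵀ) i j) ^ 2 = ∑ i : Fin k, ∑ j : Fin k, (M i j)^2 := by
    intro M
    have : ∑ i : Fin n, ∑ j : Fin k, ((U * M * Vᵀ) i j) ^ 2
        = Matrix.trace ((U * M * Vᵀ)ᵀ * (U * M * Vᵀ)) := by
      simp only [sq]; exact frob2 _ _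
    rw [this]
    have h2 : (U * M * Vᵀ)ᵀ * (U * M * Vᵀ) = V * (Mᵀ * M) * Vᵀ := by
      calc (U * M * Vᵀ)ᵀ * (U * M * Vᵀ)
          = V * (Mᵀ * ((Uᵀ * U) * (M * Vᵀ))) := by
            simp [Matrix.transpose_mul, Matrix.mul_assoc]
        _ = V * (Mᵀ * M) * Vᵀ := by rw [hU]; simp [Matrix.mul_assoc]
    rw [h2, Matrix.trace_mul_cycle, ← Matrix.mul_assoc, hV, Matrix.one_mul]
    rw [← frob2]
    exact Finset.sum_congr rfl fun i _ => Finset.sum_congr rfl fun j _ => (sq _).symm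
  -- part 2
  have part2 : ∑ i : Fin n, ∑ j : Fin k, (A i j - (U * Vᵀ) i j) ^ 2
      = ∑ i : Fin k, (σ i - 1) ^ 2 := by
    have hd : A - U * Vᵀ = U * Matrix.diagonal (fun i => σ i - 1) * Vᵀ := by
      rw [hSVD]
      have : Matrix.diagonal (fun i => σ i - 1) = Matrix.diagonal σ - 1 := by
        rw [← Matrix.diagonal_one, ← Matrix.diagonal_sub]
      rw [this, Matrix.mul_sub, Matrix.sub_mul, Matrix.mul_one]
    have := key (Matrix.diagonal fun i => σ i - 1)
    calc ∑ i : Fin n, ∑ j : Fin k, (A i j - (U * Vᵀ) i j) ^ 2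
        = ∑ i : Fin n, ∑ j : Fin k, ((A - U * Vᵀ) i j) ^ 2 := by simp
      _ = ∑ i : Fin k, ∑ j : Fin k, ((Matrix.diagonal fun i => σ i - 1) i j)^2 := by
          rw [hd] at *; exact this
      _ = ∑ i : Fin k, (σ i - 1) ^ 2 := by
          refine Finset.sum_congr rfl fun i _ => ?_
          rw [Finset.sum_eq_single i]
          · simp
          · intro j _ hj; simp [Matrix.diagonal_apply_ne' _ hj]
          · simp
  refine ⟨part1, part2, ?_⟩
  -- lower bound
  set e := ∑ i : Fin k, (σ i - 1) ^ 2 with he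
  have hmem : e ∈ {d : ℝ | ∃ B : Matrix (Fin n) (Fin k) ℝ,
      Bᵀ * B = 1 ∧ d = ∑ i : Fin n, ∑ j : Fin k, (A i j - B i j) ^ 2} :=
    ⟨U * Vᵀ, part1, part2.symm⟩
  have hlb : ∀ d ∈ {d : ℝ | ∃ B : Matrix (Fin n) (Fin k) ℝ,
      Bᵀ * B = 1 ∧ d = ∑ i : Fin n, ∑ j : Fin k, (A i j - B i j) ^ 2}, e ≤ d := by
    rintro d ⟨B, hB, rfl⟩
    set W := B * V with hWdef
    have hW : Wᵀ * W = 1 := by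
      calc Wᵀ * W = Vᵀ * (Bᵀ * B) * V := by simp [hWdef, Matrix.transpose_mul, Matrix.mul_assoc]
        _ = 1 := by rw [hB]; simp [hV]
    -- column norms
    have hUcol : ∀ i : Fin k, ∑ m : Fin n, U m i * U m i = 1 := by
      intro i
      have := congrFun (congrFun hU i) i
      simpa [Matrix.mul_apply, Matrix.one_apply] using this
    have hWcol : ∀ i : Fin k, ∑ m : Fin n, W m i * W m i = 1 := by
      intro i
      have := congrFun (congrFun hW i) i
      simpa [Matrix.mul_apply, Matrix.one_apply] using this
    have hCS : ∀ i : Fin k, (Uᵀ * W) i i ≤ 1 := by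
      intro i
      have h := Finset.sum_mul_sq_le_sq_mul_sq Finset.univ (fun m => U m i) (fun m => W m i)
      simp only [← sq] at hUcol hWcol
      rw [hUcol i, hWcol i, one_mul] at h
      have habs : |(Uᵀ * W) i i| ≤ 1 := by
        rw [← Real.sqrt_one, ← Real.sqrt_sq_eq_abs]
        apply Real.sqrt_le_sqrt
        simpa [Matrix.mul_apply, Matrix.transpose_apply] using h
      exact le_trans (le_abs_self _) habs
    -- expansion
    have h1 : ∑ i : Fin n, ∑ j : Fin k, (A i j) ^ 2 = ∑ i : Fin k, σ i ^ 2 := by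
      have hk2 := key (Matrix.diagonal σ)
      rw [← hSVD] at hk2
      rw [hk2, diag_sq_sum]
    have h2 : ∑ i : Fin n, ∑ j : Fin k, A i j * B i j
        = ∑ i : Fin k, σ i * (Uᵀ * W) i i := by
      rw [frob2, hSVD]
      have : (U * Matrix.diagonal σ * Vᵀ)ᵀ * B
          = V * ((Matrix.diagonal σ) * (Uᵀ * B)) := by
        simp [Matrix.transpose_mul, Matrix.mul_assoc]
      rw [this, Matrix.trace_mul_comm, Matrix.mul_assoc, trace_diag_mul]
      have h4 : Uᵀ * B * V = Uᵀ * W := by rw [hWdef, Matrix.mul_assoc]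
      rw [h4]
    have h3 : ∑ i : Fin n, ∑ j : Fin k, (B i j) ^ 2 = (k : ℝ) := by
      simp only [sq]
      rw [frob2, hB, Matrix.trace_one]
      simp
    have expand : ∑ i : Fin n, ∑ j : Fin k, (A i j - B i j) ^ 2
        = (∑ i : Fin n, ∑ j : Fin k, (A i j) ^ 2)
          - 2 * (∑ i : Fin n, ∑ j : Fin k, A i j * B i j)
          + (∑ i : Fin n, ∑ j : Fin k, (B i j) ^ 2) := by
      have step : ∑ i : Fin n, ∑ j : Fin k, (A i j - B i j) ^ 2
          = ∑ i : Fin n, ∑ j : Fin k, ((A i j)^2 - 2 * (A i j * B i j) + (B i j)^2) :=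
        Finset.sum_congr rfl fun i _ => Finset.sum_congr rfl fun j _ => by ring
      rw [step]
      simp only [Finset.sum_add_distrib, Finset.sum_sub_distrib, ← Finset.mul_sum]
    have hsum : ∑ i : Fin k, σ i * (Uᵀ * W) i i ≤ ∑ i : Fin k, σ i :=
      Finset.sum_le_sum fun i _ => mul_le_of_le_one_right (hσ i) (hCS i)
    have he2 : e = (∑ i : Fin k, σ i ^ 2) - 2 * (∑ i : Fin k, σ i) + (k : ℝ) := by
      rw [he]
      calc ∑ i : Fin k, (σ i - 1) ^ 2 = ∑ i : Fin k, (σ i ^ 2 - 2 * σ i + 1) :=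
            Finset.sum_congr rfl fun i _ => by ring
        _ = _ := by
            rw [Finset.sum_add_distrib, Finset.sum_sub_distrib, Finset.sum_const,
              Finset.card_univ, Fintype.card_fin, ← Finset.mul_sum]
            simp
    rw [expand, h2, h3, h1, he2]
    linarith
  refine le_antisymm (csInf_le ⟨e, hlb⟩ hmem) (le_csInf ⟨e, hmem⟩ hlb)
end

section
/- Let A be a symmetric n×n real matrix whose eigenvalues λ₁ < λ₂ < … < λ_n are all distinct, let 1 ≤ k ≤ n, and for an n×k matrix Y with columns y₁, …, y_k let Y_j denote the n×j matrix of the first j columns. If Y is a global minimizer of the sequential objective Σ_{j=1}^{k} Tr(Y_jᵀ A Y_j) subject to the constraint Yᵀ Y = I_k, then each column y_i is an eigenvector of A associated with the i-th smallest eigenvalue λ_i; in particular, the columns of the global optimum are mutually orthogonal eigenvectors of A, ordered by eigenvalue. -/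
open Matrix Finset

/-- The submatrix of the first `j+1` columns of an `n × k` matrix `Y` (for `j : Fin k`). -/
def firstCols (n k : ℕ) (Y : Matrix (Fin n) (Fin k) ℝ) (j : Fin k) :
    Matrix (Fin n) (Fin (j.val + 1)) ℝ :=
  Y.submatrix id (Fin.castLE j.isLt)

/-- The sequential Rayleigh objective `Σ_{j=1}^{k} Tr(Y_jᵀ A Y_j)`, where `Y_j` is the
matrix of the first `j` columns of `Y`. -/
noncomputable def seqRayleigh (n k : ℕ) (A : Matrix (Fin n) (Fin n) ℝ)
    (Y : Matrix (Fin n) (Fin k) ℝ) : ℝ :=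
  ∑ j : Fin k, ((firstCols n k Y j)ᵀ * A * firstCols n k Y j).trace

lemma aux_trace (n m : ℕ) (C : Matrix (Fin n) (Fin m) ℝ) (l : Fin n → ℝ) :
    (Cᵀ * Matrix.diagonal l * C).trace = ∑ p, l p * ∑ c, (C p c)^2 := by
  simp only [Matrix.trace, Matrix.diag, Matrix.mul_apply, Matrix.transpose_apply,
    Matrix.diagonal_apply, ite_mul, zero_mul, mul_ite, mul_zero, Finset.sum_ite_eq,
    Finset.sum_ite_eq', Finset.mem_univ, if_true]
  rw [Finset.sum_comm]
  refine Finset.sum_congr rfl fun p _ => ?_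
  rw [Finset.mul_sum]
  refine Finset.sum_congr rfl fun c _ => by ring

lemma aux_mul_sub {n k m : ℕ} (M : Matrix (Fin n) (Fin n) ℝ) (N : Matrix (Fin n) (Fin k) ℝ)
    (g : Fin m → Fin k) : M * (N.submatrix id g) = (M * N).submatrix id g := by
  ext r c
  simp [Matrix.mul_apply]

lemma aux_card (n m : ℕ) (hm : m < n) :
    ∑ p : Fin n, (if (p : ℕ) ≤ m then (1:ℝ) else 0) = m + 1 := by
  rw [Finset.sum_boole]
  have h : univ.filter (fun p : Fin n => (p:ℕ) ≤ m)
      = (univ : Finset (Fin (m+1))).map (Fin.castLEEmb hm) := by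
    ext p
    simp only [mem_filter, mem_univ, true_and, Finset.mem_map, Fin.castLEEmb_apply]
    constructor
    · intro hp
      exact ⟨⟨p, Nat.lt_succ_of_le hp⟩, by simp [Fin.ext_iff]⟩
    · rintro ⟨c, rfl⟩
      simpa using Nat.lt_succ_iff.mp c.isLt
  rw [h, Finset.card_map]
  simp

lemma kyfan {n : ℕ} (l : Fin n → ℝ) (hl : StrictMono l) (m : ℕ) (hm : m < n)
    (s : Fin n → ℝ) (h0 : ∀ p, 0 ≤ s p) (h1 : ∀ p, s p ≤ 1)
    (hsum : ∑ p, s p = m + 1) :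
    (∑ p, l p * (if (p:ℕ) ≤ m then 1 else 0)) ≤ (∑ p, l p * s p) ∧
    ((∑ p, l p * s p) ≤ (∑ p, l p * (if (p:ℕ) ≤ m then 1 else 0)) →
      ∀ p : Fin n, m < (p:ℕ) → s p = 0) := by
  set t := l ⟨m, hm⟩ with ht
  set g : Fin n → ℝ := fun p =>
    if (p:ℕ) ≤ m then (t - l p) * (1 - s p) else (l p - t) * s p with hg
  have hg0 : ∀ p, 0 ≤ g p := by
    intro p
    simp only [hg]
    split
    · rename_i h
      have : l p ≤ t := hl.monotone (by simpa [Fin.le_def] using h)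
      have := h1 p
      nlinarith
    · rename_i h
      have : t ≤ l p := hl.monotone (by simp [Fin.le_def]; omega)
      have := h0 p
      nlinarith
  have hgsum : ∑ p, g p = (∑ p, l p * s p) - (∑ p, l p * (if (p:ℕ) ≤ m then 1 else 0)) := by
    have h1' : ∑ p, g p = ∑ p, (l p * s p - l p * (if (p:ℕ) ≤ m then 1 else 0)
        + t * ((if (p:ℕ) ≤ m then 1 else 0) - s p)) := by
      refine Finset.sum_congr rfl fun p _ => ?_
      simp only [hg]
      split <;> ring
    rw [h1', Finset.sum_add_distrib, Finset.sum_sub_distrib, ← Finset.mul_sum,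
      Finset.sum_sub_distrib, aux_card n m hm, hsum]
    ring
  constructor
  · have : 0 ≤ ∑ p, g p := Finset.sum_nonneg fun p _ => hg0 p
    linarith [hgsum]
  · intro hle p hp
    have hz : ∑ p, g p = 0 := le_antisymm (by linarith [hgsum]) (Finset.sum_nonneg fun p _ => hg0 p)
    have := (Finset.sum_eq_zero_iff_of_nonneg (fun p _ => hg0 p)).mp hz p (Finset.mem_univ p)
    simp only [hg, Nat.not_le.mpr hp, if_neg (Nat.not_le.mpr hp)] at this
    have hlt : t < l p := hl (by simp [Fin.lt_def]; omega)
    rcases mul_eq_zero.mp this with h | h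
    · linarith
    · exact h

lemma aux_delta_sum (n m : ℕ) (p : Fin n) :
    ∑ c : Fin (m+1), (if (p:ℕ) = (c:ℕ) then (1:ℝ) else 0) = if (p:ℕ) ≤ m then 1 else 0 := by
  by_cases h : (p:ℕ) ≤ m
  · rw [if_pos h, Finset.sum_eq_single (⟨p, Nat.lt_succ_of_le h⟩ : Fin (m+1))]
    · simp
    · intro c _ hc
      rw [if_neg]
      intro hval
      exact hc (by simp [Fin.ext_iff, ← hval])
    · simp
  · rw [if_neg h, Finset.sum_eq_zero]
    intro c _
    rw [if_neg]
    have := c.isLt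
    omega

lemma aux_proj {n k : ℕ} (B : Matrix (Fin n) (Fin k) ℝ) (hB : Bᵀ * B = 1) (p : Fin n) :
    ∑ c, (B p c)^2 ≤ 1 := by
  set P := B * Bᵀ with hPdef
  have hPP : P * P = P := by
    rw [hPdef, Matrix.mul_assoc, ← Matrix.mul_assoc Bᵀ, hB, Matrix.one_mul]
  have hsymm : ∀ q r : Fin n, P q r = P r q := by
    intro q r
    simp [hPdef, Matrix.mul_apply, mul_comm]
  have hdiag : P p p = ∑ c, (B p c)^2 := by
    simp [hPdef, Matrix.mul_apply, sq]
  have h2 : P p p = ∑ q, (P p q)^2 := by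
    conv_lhs => rw [← hPP]
    simp only [Matrix.mul_apply]
    exact Finset.sum_congr rfl fun q _ => by rw [sq, hsymm q p]
  have hle : (P p p)^2 ≤ P p p := by
    nth_rewrite 2 [h2]
    exact Finset.single_le_sum (f := fun q => (P p q)^2) (fun q _ => sq_nonneg _) (Finset.mem_univ p)
  nlinarith [hdiag, hle]

/-- Let `A` be a symmetric `n × n` real matrix whose eigenvalues
`λ₁ < λ₂ < … < λ_n` are all distinct (i.e. `A = V diag(λ) Vᵀ` with `V` orthogonal and `λ`
strictly monotone), and let `1 ≤ k ≤ n`. If `Y` is a global minimizer of the sequential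
objective `Σ_{j=1}^{k} Tr(Y_jᵀ A Y_j)` subject to `Yᵀ Y = I_k`, then each column `y_i` of
`Y` is an eigenvector of `A` associated with the `i`-th smallest eigenvalue `λ_i`; in
particular the columns of the global optimum are mutually orthogonal eigenvectors of `A`,
ordered by eigenvalue. -/
theorem seq_rayleigh_minimizer_columns_are_eigenvectors
    (n k : ℕ) (hk1 : 1 ≤ k) (hkn : k ≤ n)
    (A : Matrix (Fin n) (Fin n) ℝ) (hA : Aᵀ = A)
    (V : Matrix (Fin n) (Fin n) ℝ) (hV : Vᵀ * V = 1)
    (l : Fin n → ℝ) (hl : StrictMono l)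
    (hdecomp : A = V * Matrix.diagonal l * Vᵀ)
    (Y : Matrix (Fin n) (Fin k) ℝ) (hY : Yᵀ * Y = 1)
    (hmin : ∀ Z : Matrix (Fin n) (Fin k) ℝ, Zᵀ * Z = 1 →
      seqRayleigh n k A Y ≤ seqRayleigh n k A Z) :
    ∀ i : Fin k, A *ᵥ (fun r => Y r i) = l (Fin.castLE hkn i) • (fun r => Y r i) := by
  have hVVt : V * Vᵀ = 1 := mul_eq_one_comm.mp hV
  have hVe : ∀ a b : Fin n, (∑ r, V r a * V r b) = if a = b then (1:ℝ) else 0 := by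
    intro a b
    have := congrFun (congrFun hV a) b
    simpa [Matrix.mul_apply, Matrix.one_apply] using this
  -- the general trace formula
  have hsr : ∀ (W : Matrix (Fin n) (Fin k) ℝ), seqRayleigh n k A W
      = ∑ j : Fin k, ∑ p, l p * ∑ c : Fin (j.val+1), ((Vᵀ*W) p (Fin.castLE j.isLt c))^2 := by
    intro W
    unfold seqRayleigh
    refine Finset.sum_congr rfl fun j _ => ?_
    have h2 : (firstCols n k W j)ᵀ * A * firstCols n k W j
        = (Vᵀ * firstCols n k W j)ᵀ * Matrix.diagonal l * (Vᵀ * firstCols n k W j) := by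
      rw [hdecomp, Matrix.transpose_mul, Matrix.transpose_transpose]
      simp only [Matrix.mul_assoc]
    rw [h2, aux_trace]
    have h3 : Vᵀ * firstCols n k W j = (Vᵀ * W).submatrix id (Fin.castLE j.isLt) :=
      aux_mul_sub Vᵀ W (Fin.castLE j.isLt)
    rw [h3]
    simp [Matrix.submatrix_apply]
  -- B and its orthogonality
  set B : Matrix (Fin n) (Fin k) ℝ := Vᵀ * Y with hBdef
  have hBo : Bᵀ * B = 1 := by
    rw [hBdef, Matrix.transpose_mul, Matrix.transpose_transpose, Matrix.mul_assoc,
      ← Matrix.mul_assoc V Vᵀ Y, hVVt, Matrix.one_mul, hY]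
  have hBe : ∀ c c' : Fin k, (∑ q, B q c * B q c') = if c = c' then (1:ℝ) else 0 := by
    intro c c'
    have := congrFun (congrFun hBo c) c'
    simpa [Matrix.mul_apply, Matrix.one_apply] using this
  -- the auxiliary s-quantities
  set s : Fin k → Fin n → ℝ :=
    fun j p => ∑ c : Fin (j.val+1), (B p (Fin.castLE j.isLt c))^2 with hs
  have hYval : seqRayleigh n k A Y = ∑ j : Fin k, ∑ p, l p * s j p := hsr Y
  -- the comparison matrix Z
  set Z : Matrix (Fin n) (Fin k) ℝ := V.submatrix id (Fin.castLE hkn) with hZdef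
  have hZo : Zᵀ * Z = 1 := by
    ext c c'
    have : (Zᵀ * Z) c c' = ∑ r, V r (Fin.castLE hkn c) * V r (Fin.castLE hkn c') := by
      simp [hZdef, Matrix.mul_apply, Matrix.submatrix_apply]
    rw [this, hVe, Matrix.one_apply]
    simp [Fin.castLE_inj]
  have hZval : seqRayleigh n k A Z
      = ∑ j : Fin k, ∑ p, l p * (if (p:ℕ) ≤ (j:ℕ) then 1 else 0) := by
    rw [hsr Z]
    refine Finset.sum_congr rfl fun j _ => Finset.sum_congr rfl fun p _ => ?_
    congr 1
    have hZe : ∀ c : Fin (j.val+1),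
        (Vᵀ * Z) p (Fin.castLE j.isLt c) = if (p:ℕ) = (c:ℕ) then (1:ℝ) else 0 := by
      intro c
      have h4 : (Vᵀ * Z) p (Fin.castLE j.isLt c)
          = ∑ r, V r p * V r (Fin.castLE hkn (Fin.castLE j.isLt c)) := by
        simp [hZdef, Matrix.mul_apply, Matrix.submatrix_apply]
      rw [h4, hVe]
      simp [Fin.ext_iff]
    calc ∑ c : Fin (j.val+1), ((Vᵀ * Z) p (Fin.castLE j.isLt c))^2
        = ∑ c : Fin (j.val+1), (if (p:ℕ) = (c:ℕ) then (1:ℝ) else 0) := by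
          refine Finset.sum_congr rfl fun c _ => ?_
          rw [hZe c]
          split <;> norm_num
      _ = if (p:ℕ) ≤ (j:ℕ) then 1 else 0 := aux_delta_sum n j.val p
  -- properties of s
  have hs0 : ∀ j p, 0 ≤ s j p := fun j p => Finset.sum_nonneg fun c _ => sq_nonneg _
  have hs1 : ∀ j p, s j p ≤ 1 := by
    intro j p
    have h5 : s j p = ∑ c ∈ (univ : Finset (Fin (j.val+1))).map (Fin.castLEEmb j.isLt),
        (B p c)^2 := by
      rw [Finset.sum_map]
      rfl
    have h6 : ∑ c ∈ (univ : Finset (Fin (j.val+1))).map (Fin.castLEEmb j.isLt), (B p c)^2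
        ≤ ∑ c, (B p c)^2 :=
      Finset.sum_le_sum_of_subset_of_nonneg (Finset.subset_univ _) fun c _ _ => sq_nonneg _
    rw [h5]
    exact le_trans h6 (aux_proj B hBo p)
  have hssum : ∀ j : Fin k, ∑ p, s j p = (j : ℕ) + 1 := by
    intro j
    rw [hs]
    rw [Finset.sum_comm]
    have h7 : ∀ c'' : Fin k, ∑ p, (B p c'')^2 = 1 := by
      intro c''
      have := hBe c'' c''
      simpa [sq] using this
    calc ∑ c : Fin (j.val+1), ∑ p, (B p (Fin.castLE j.isLt c))^2
        = ∑ c : Fin (j.val+1), (1:ℝ) := Finset.sum_congr rfl fun c _ => h7 _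
      _ = (j : ℕ) + 1 := by simp
  have hjn : ∀ j : Fin k, (j : ℕ) < n := fun j => lt_of_lt_of_le j.isLt hkn
  -- the key Ky Fan bounds
  have hLT : ∀ j : Fin k, (∑ p, l p * (if (p:ℕ) ≤ (j:ℕ) then 1 else 0)) ≤ ∑ p, l p * s j p :=
    fun j => (kyfan l hl j.val (hjn j) (s j) (hs0 j) (hs1 j) (hssum j)).1
  have hsum_le : (∑ j : Fin k, ∑ p, l p * s j p)
      ≤ ∑ j : Fin k, ∑ p, l p * (if (p:ℕ) ≤ (j:ℕ) then 1 else 0) := by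
    rw [← hYval, ← hZval]
    exact hmin Z hZo
  have hTL : ∀ j : Fin k, (∑ p, l p * s j p)
      = ∑ p, l p * (if (p:ℕ) ≤ (j:ℕ) then 1 else 0) := by
    have heq : (∑ j : Fin k, ∑ p, l p * (if (p:ℕ) ≤ (j:ℕ) then 1 else 0))
        = ∑ j : Fin k, ∑ p, l p * s j p :=
      le_antisymm (Finset.sum_le_sum fun j _ => hLT j) hsum_le
    intro j
    exact ((Finset.sum_eq_sum_iff_of_le (fun j _ => hLT j)).mp heq j (Finset.mem_univ j)).symm
  have hzero : ∀ j : Fin k, ∀ p : Fin n, (j:ℕ) < (p:ℕ) → s j p = 0 :=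
    fun j => (kyfan l hl j.val (hjn j) (s j) (hs0 j) (hs1 j) (hssum j)).2 (le_of_eq (hTL j))
  -- triangularity
  have htri : ∀ (p : Fin n) (c : Fin k), (c:ℕ) < (p:ℕ) → B p c = 0 := by
    intro p c h
    have h8 := hzero c p h
    rw [hs] at h8
    have h9 := (Finset.sum_eq_zero_iff_of_nonneg (fun c' _ => sq_nonneg _)).mp h8
      ⟨c.val, Nat.lt_succ_self _⟩ (Finset.mem_univ _)
    have hcast : Fin.castLE c.isLt (⟨c.val, Nat.lt_succ_self _⟩ : Fin (c.val+1)) = c :=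
      Fin.ext rfl
    rw [hcast] at h9
    exact sq_eq_zero_iff.mp h9
  -- concentration on the diagonal
  have key : ∀ N : ℕ, ∀ c : Fin k, (c:ℕ) = N → ∀ p : Fin n, (p:ℕ) ≠ (c:ℕ) → B p c = 0 := by
    intro N
    induction N using Nat.strong_induction_on with
    | _ N ih =>
      intro c hc p hp
      rcases lt_trichotomy (p:ℕ) (c:ℕ) with h | h | h
      · set c' : Fin k := ⟨(p:ℕ), lt_trans h c.isLt⟩ with hc'
        have hcol : ∀ q : Fin n, (q:ℕ) ≠ (p:ℕ) → B q c' = 0 := by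
          intro q hq
          exact ih (p:ℕ) (by omega) c' rfl q hq
        have hone : B p c' * B p c' = 1 := by
          have h10 := hBe c' c'
          rw [Finset.sum_eq_single p
            (fun q _ hq => by rw [hcol q (fun h' => hq (Fin.ext h')), zero_mul])
            (fun h' => absurd (Finset.mem_univ p) h')] at h10
          simpa using h10
        have hzero2 : B p c' * B p c = 0 := by
          have hne : c' ≠ c := by
            simp only [hc', ne_eq, Fin.ext_iff]
            omega
          have h11 := hBe c' c
          rw [Finset.sum_eq_single p
            (fun q _ hq => by rw [hcol q (fun h' => hq (Fin.ext h')), zero_mul])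
            (fun h' => absurd (Finset.mem_univ p) h')] at h11
          rw [h11, if_neg hne]
        rcases mul_eq_zero.mp hzero2 with h' | h'
        · rw [h'] at hone; norm_num at hone
        · exact h'
      · exact absurd h hp
      · exact htri p c h
  have hconc : ∀ (c : Fin k) (p : Fin n), (p:ℕ) ≠ (c:ℕ) → B p c = 0 :=
    fun c => key (c:ℕ) c rfl
  -- conclude
  have hYVB : Y = V * B := by
    rw [hBdef, ← Matrix.mul_assoc, hVVt, Matrix.one_mul]
  have hDB : Matrix.diagonal l * B
      = B * Matrix.diagonal (fun c : Fin k => l (Fin.castLE hkn c)) := by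
    ext p c
    rw [Matrix.diagonal_mul, Matrix.mul_diagonal]
    by_cases h : (p:ℕ) = (c:ℕ)
    · have hpc : p = Fin.castLE hkn c := Fin.ext h
      rw [hpc]
      ring
    · rw [hconc c p h]
      ring
  have hAY : A * Y = Y * Matrix.diagonal (fun c : Fin k => l (Fin.castLE hkn c)) := by
    have h1 : A * Y = V * (Matrix.diagonal l * B) := by
      rw [hdecomp, Matrix.mul_assoc (V * Matrix.diagonal l) Vᵀ Y, ← hBdef, Matrix.mul_assoc]
    rw [h1, hDB, ← Matrix.mul_assoc, ← hYVB]
  intro i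
  funext r
  have h12 : (A *ᵥ fun r => Y r i) r = (A * Y) r i := by
    simp [Matrix.mulVec, dotProduct, Matrix.mul_apply]
  rw [h12, hAY, Matrix.mul_diagonal]
  simp [mul_comm]
end
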